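/- arXiv:2403.01947 — 3 statements merged into one kernel-verified Lean document; each statement's English description precedes it below -/
import Mathlib

section
/- A split graph G is ambiguous if and only if every maximal clique of G contains a simplicial vertex. -/
namespace CAG

variable {V : Type*}

/-- The circle on which circular-arc models live. -/
abbrev Circle : Type := AddCircle (1 : ℝ)

/-- The closed arc of the circle starting at `s` and going a length `ℓ` in the
positive direction. -/
def circleArc (s ℓ : ℝ) : Set Circle :=
  (fun x : ℝ => (x : Circle)) '' Set.Icc s (s + ℓ)

/-- A circular-arc model of a graph `G`: an assignment of nonempty closed arcs of the
circle to vertices such that two distinct vertices are adjacent iff their arcs meet. -/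
structure CircularArcModel (G : SimpleGraph V) where
  arc : V → Set Circle
  isArc : ∀ v : V, ∃ s ℓ : ℝ, 0 ≤ ℓ ∧ arc v = circleArc s ℓ
  adj_iff : ∀ u v : V, u ≠ v → (G.Adj u v ↔ (arc u ∩ arc v).Nonempty)

/-- A graph is a circular-arc graph if it has a circular-arc model. -/
def IsCircularArcGraph (G : SimpleGraph V) : Prop := Nonempty (CircularArcModel G)

/-- An interval model of a graph `G`: an assignment of nonempty closed real intervals
to vertices such that two distinct vertices are adjacent iff their intervals meet. -/
structure IntervalModel (G : SimpleGraph V) where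
  lo : V → ℝ
  hi : V → ℝ
  lo_le_hi : ∀ v : V, lo v ≤ hi v
  adj_iff : ∀ u v : V, u ≠ v →
    (G.Adj u v ↔ (Set.Icc (lo u) (hi u) ∩ Set.Icc (lo v) (hi v)).Nonempty)

/-- The interval assigned to a vertex by an interval model. -/
def IntervalModel.ival {G : SimpleGraph V} (M : IntervalModel G) (v : V) : Set ℝ :=
  Set.Icc (M.lo v) (M.hi v)

/-- A graph is an interval graph if it has an interval model. -/
def IsIntervalGraph (G : SimpleGraph V) : Prop := Nonempty (IntervalModel G)

/-- The closed neighbourhood `N[v]` of a vertex. -/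
def closedNbhd (G : SimpleGraph V) (v : V) : Set V := insert v (G.neighborSet v)

/-- A vertex is simplicial if its closed neighbourhood is a clique. -/
def IsSimplicial (G : SimpleGraph V) (v : V) : Prop := G.IsClique (closedNbhd G v)

/-- The cycle graph on `n` vertices. -/
def cycleG (n : ℕ) : SimpleGraph (Fin n) :=
  SimpleGraph.fromRel (fun a b => (a.val + 1) % n = b.val)

/-- `G` contains an induced copy of `F`. -/
def InducedCopy {W : Type*} (F : SimpleGraph W) (G : SimpleGraph V) : Prop :=
  Nonempty (F ↪g G)

/-- A graph is chordal if it has no induced cycle of length at least 4. -/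
def Chordal (G : SimpleGraph V) : Prop :=
  ∀ n : ℕ, 4 ≤ n → ¬ InducedCopy (cycleG n) G

/-- The adjacency relation of the auxiliary graph `G^K`. -/
def auxAdj (G : SimpleGraph V) (K : Set V) (u v : V) : Prop :=
  (u ∈ K ∧ v ∈ K ∧ G.neighborSet u ∪ G.neighborSet v ≠ Set.univ) ∨
  (u ∉ K ∧ v ∉ K ∧ G.Adj u v) ∨
  (u ∈ K ∧ v ∉ K ∧ ¬ closedNbhd G v ⊆ closedNbhd G u) ∨
  (v ∈ K ∧ u ∉ K ∧ ¬ closedNbhd G u ⊆ closedNbhd G v)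

/-- The auxiliary graph `G^K` associated with a graph `G` and a clique `K`. -/
def auxGraph (G : SimpleGraph V) (K : Set V) : SimpleGraph V where
  Adj u v := u ≠ v ∧ auxAdj G K u v
  symm := by
    constructor
    rintro u v ⟨hne, h⟩
    refine ⟨hne.symm, ?_⟩
    rcases h with ⟨h1, h2, h3⟩ | ⟨h1, h2, h3⟩ | ⟨h1, h2, h3⟩ | ⟨h1, h2, h3⟩
    · exact Or.inl ⟨h2, h1, by rwa [Set.union_comm]⟩
    · exact Or.inr <| Or.inl ⟨h2, h1, h3.symm⟩
    · exact Or.inr <| Or.inr <| Or.inr ⟨h1, h2, h3⟩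
    · exact Or.inr <| Or.inr <| Or.inl ⟨h1, h2, h3⟩
  loopless := ⟨fun _ h => h.1 rfl⟩

/-- Condition (♯): `G^K` admits an interval model in which, for every `v ∈ K` and
`u ∉ K`, the interval of `v` contains the interval of `u` iff `u` and `v` are not
adjacent in `G`. -/
def SatisfiesSharp (G : SimpleGraph V) (K : Set V) : Prop :=
  ∃ M : IntervalModel (auxGraph G K),
    ∀ v ∈ K, ∀ u ∉ K, (M.ival u ⊆ M.ival v ↔ ¬ G.Adj v u)

/-- An independent set of a graph. -/
def IsIndependentSet (G : SimpleGraph V) (s : Set V) : Prop :=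
  ∀ ⦃u⦄, u ∈ s → ∀ ⦃v⦄, v ∈ s → u ≠ v → ¬ G.Adj u v

/-- A split partition: a partition of the vertex set into a clique and an independent set. -/
def IsSplitPartition (G : SimpleGraph V) (K S : Set V) : Prop :=
  K ∪ S = Set.univ ∧ Disjoint K S ∧ G.IsClique K ∧ IsIndependentSet G S

/-- A split graph. -/
def IsSplitGraph (G : SimpleGraph V) : Prop := ∃ K S : Set V, IsSplitPartition G K S

/-- A split graph is ambiguous if it has two distinct split partitions. -/
def Ambiguous (G : SimpleGraph V) : Prop :=
  ∃ K₁ S₁ K₂ S₂ : Set V, IsSplitPartition G K₁ S₁ ∧ IsSplitPartition G K₂ S₂ ∧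
    (K₁, S₁) ≠ (K₂, S₂)

/-- A maximal clique (as a set of vertices). -/
def IsMaxCliqueSet (G : SimpleGraph V) (C : Set V) : Prop :=
  G.IsClique C ∧ ∀ C' : Set V, G.IsClique C' → C ⊆ C' → C = C'

/-- A Helly circular-arc graph: one admitting a circular-arc model in which the arcs of
every maximal clique have a common point. -/
def IsHellyCircularArcGraph (G : SimpleGraph V) : Prop :=
  ∃ M : CircularArcModel G, ∀ C : Set V, IsMaxCliqueSet G C →
    ∃ p : Circle, ∀ v ∈ C, p ∈ M.arc v

/-- The edge `ab` lies on an induced 4-cycle. -/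
def EdgeOnInducedC4 (G : SimpleGraph V) (a b : V) : Prop :=
  ∃ c d : V, a ≠ c ∧ b ≠ d ∧ G.Adj a b ∧ G.Adj b c ∧ G.Adj c d ∧ G.Adj d a ∧
    ¬ G.Adj a c ∧ ¬ G.Adj b d

/-- A normalized circular-arc model. -/
def IsNormalized {G : SimpleGraph V} (M : CircularArcModel G) : Prop :=
  ∀ v₁ v₂ : V, G.Adj v₁ v₂ →
    (closedNbhd G v₂ ⊆ closedNbhd G v₁ → M.arc v₂ ⊆ M.arc v₁) ∧
    (G.neighborSet v₁ ∪ G.neighborSet v₂ = Set.univ → ¬ EdgeOnInducedC4 G v₁ v₂ →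
      M.arc v₁ ∪ M.arc v₂ = Set.univ)

/-- A universal vertex: a vertex adjacent to all other vertices. -/
def HasUniversalVertex (G : SimpleGraph V) : Prop :=
  ∃ v : V, ∀ u : V, u ≠ v → G.Adj v u

/-- `w` is a witness of the set `X ⊆ K`: a vertex of `S` adjacent in `G^K` to all of `X`. -/
def WitnessOf (G : SimpleGraph V) (K S : Set V) (w : V) (X : Set V) : Prop :=
  w ∈ S ∧ ∀ x ∈ X, (auxGraph G K).Adj w x

/-- A set `X` is witnessed if it has a witness. -/
def Witnessed (G : SimpleGraph V) (K S : Set V) (X : Set V) : Prop :=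
  ∃ w : V, WitnessOf G K S w X

/-- The induced subgraph of `G^K` on the vertex set `F` is witnessed: every maximal
clique of this subgraph that is disjoint from `S` is witnessed. -/
def WitnessedCopy (G : SimpleGraph V) (K S F : Set V) : Prop :=
  ∀ C ⊆ F, (auxGraph G K).IsClique C →
    (∀ C' ⊆ F, (auxGraph G K).IsClique C' → C ⊆ C' → C = C') →
    Disjoint C S → Witnessed G K S C

/-- The sun: a triangle 0,1,2 together with degree-two vertices 3 (adjacent to 0,1),
4 (adjacent to 1,2) and 5 (adjacent to 0,2). -/
def sunF : SimpleGraph (Fin 6) :=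
  SimpleGraph.fromRel (fun a b =>
    (a = 0 ∧ b = 1) ∨ (a = 0 ∧ b = 2) ∨ (a = 1 ∧ b = 2) ∨
    (a = 3 ∧ (b = 0 ∨ b = 1)) ∨ (a = 4 ∧ (b = 1 ∨ b = 2)) ∨ (a = 5 ∧ (b = 0 ∨ b = 2)))

/-- The long claw: centre 0 adjacent to 1,2,3; pendant vertices 4,5,6 attached to
1,2,3 respectively. -/
def longClaw : SimpleGraph (Fin 7) :=
  SimpleGraph.fromRel (fun a b =>
    (a = 0 ∧ (b = 1 ∨ b = 2 ∨ b = 3)) ∨ (a = 1 ∧ b = 4) ∨ (a = 2 ∧ b = 5) ∨ (a = 3 ∧ b = 6))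

/-- The whipping top, with vertices v0 = 0, v1 = 1, v2 = 2, v3 = 3, x1 = 4, x2 = 5,
x3 = 6: the path x1-v1-v2-v3-x3, with v0 adjacent to x1, v1, v2, v3, x3 and x2
adjacent exactly to v2. -/
def whippingTop : SimpleGraph (Fin 7) :=
  SimpleGraph.fromRel (fun a b =>
    (a = 4 ∧ b = 1) ∨ (a = 1 ∧ b = 2) ∨ (a = 2 ∧ b = 3) ∨ (a = 3 ∧ b = 6) ∨
    (a = 0 ∧ (b = 4 ∨ b = 1 ∨ b = 2 ∨ b = 3 ∨ b = 6)) ∨ (a = 5 ∧ b = 2))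

/-- The † graph on `p + 4` vertices: an induced path `v_1 … v_p` (the `inl` vertices),
a vertex `u0 = inr 0` adjacent to all `v_i`, and vertices `x1 = inr 1`, `x2 = inr 2`,
`x3 = inr 3` adjacent exactly to `v_1`, `u0`, `v_p` respectively. -/
def dagGraph (p : ℕ) : SimpleGraph (Fin p ⊕ Fin 4) :=
  SimpleGraph.fromRel (fun a b =>
    match a, b with
    | Sum.inl i, Sum.inl j => j.val = i.val + 1
    | Sum.inr u, Sum.inl j => u = 0 ∨ (u = 1 ∧ j.val = 0) ∨ (u = 3 ∧ j.val + 1 = p)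
    | Sum.inr u, Sum.inr w => u = 0 ∧ w = 2
    | _, _ => False)

/-- The ‡ graph on `p + 5` vertices: an induced path `v_1 … v_p` (the `inl` vertices),
adjacent vertices `u1 = inr 0` and `u2 = inr 1` each adjacent to all `v_i`, and
vertices `x1 = inr 2` (adjacent exactly to `v_1, u1`), `x2 = inr 3` (adjacent exactly
to `u1, u2`) and `x3 = inr 4` (adjacent exactly to `v_p, u2`). -/
def ddagGraph (p : ℕ) : SimpleGraph (Fin p ⊕ Fin 5) :=
  SimpleGraph.fromRel (fun a b =>
    match a, b with
    | Sum.inl i, Sum.inl j => j.val = i.val + 1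
    | Sum.inr u, Sum.inl j =>
        u = 0 ∨ u = 1 ∨ (u = 2 ∧ j.val = 0) ∨ (u = 4 ∧ j.val + 1 = p)
    | Sum.inr u, Sum.inr w =>
        (u = 0 ∧ w = 1) ∨ (u = 2 ∧ w = 0) ∨ (u = 3 ∧ (w = 0 ∨ w = 1)) ∨ (u = 4 ∧ w = 1)
    | _, _ => False)

/-- A graph is a minimal non-interval graph iff it is isomorphic to a hole, the long
claw, the whipping top, a † graph, or a ‡ graph. -/
def IsMinimalNonIntervalGraph {W : Type*} (F : SimpleGraph W) : Prop :=
  (∃ n : ℕ, 4 ≤ n ∧ Nonempty (F ≃g cycleG n)) ∨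
  Nonempty (F ≃g longClaw) ∨
  Nonempty (F ≃g whippingTop) ∨
  (∃ p : ℕ, 2 ≤ p ∧ Nonempty (F ≃g dagGraph p)) ∨
  (∃ p : ℕ, 1 ≤ p ∧ Nonempty (F ≃g ddagGraph p))

/-- The `k`-sun: the `inl` vertices form a clique (the even-numbered vertices of the
cycle of length `2k`), the `inr` vertices are independent, and `inr j` is adjacent to
`inl j` and `inl ((j+1) mod k)`. -/
def sunGraph (k : ℕ) : SimpleGraph (Fin k ⊕ Fin k) :=
  SimpleGraph.fromRel (fun a b =>
    match a, b with
    | Sum.inl _, Sum.inl _ => True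
    | Sum.inl i, Sum.inr j => i = j ∨ i.val = (j.val + 1) % k
    | _, _ => False)

/-- The graph `\overline{S_k}^+`: the complement of the `k`-sun together with a new
vertex (`none`) adjacent exactly to the `k` vertices forming a clique in the
complement (the `inr` vertices). -/
def sunComplPlus (k : ℕ) : SimpleGraph (Option (Fin k ⊕ Fin k)) :=
  SimpleGraph.fromRel (fun a b =>
    match a, b with
    | some x, some y => (sunGraph k)ᶜ.Adj x y
    | some (Sum.inr _), none => True
    | _, _ => False)

/-- The graph `S^1_k`: the disjoint union of a sun and the gadget `D_k`, with two
triangle vertices of the sun identified with `v_1` and `v_k` of the gadget, plus all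
edges between `{v_2, …, v_{k-1}}` and the four remaining sun vertices.  Here the
`inl` vertices are the gadget clique `v_1 … v_k` (0-based), `inr (inl a)` is the
gadget independent vertex `w_{a+1}`, and `inr (inr t)` for `t = 0,1,2,3` are the
third triangle vertex, and the three degree-two sun vertices adjacent (in the sun) to
`{v_1,v_k}`, `{v_1,t}`, `{v_k,t}` respectively. -/
def S1 (k : ℕ) : SimpleGraph (Fin k ⊕ (Fin (k - 1) ⊕ Fin 4)) :=
  SimpleGraph.fromRel (fun x y =>
    match x, y with
    | Sum.inl _, Sum.inl _ => True
    | Sum.inr (Sum.inl a), Sum.inl b => b.val ≠ a.val ∧ b.val ≠ a.val + 1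
    | Sum.inr (Sum.inr t), Sum.inl b =>
        t = 0 ∨ t = 1 ∨ (t = 2 ∧ b.val + 1 ≠ k) ∨ (t = 3 ∧ b.val ≠ 0)
    | Sum.inr (Sum.inr t), Sum.inr (Sum.inr t') => t = 0 ∧ (t' = 2 ∨ t' = 3)
    | _, _ => False)

/-- The graph `S^2_k`: the disjoint union of a rising sun and the gadget `D_k`, with
the two degree-five vertices of the rising sun identified with `v_1` and `v_k` of the
gadget, plus all edges between `{v_2, …, v_{k-1}}` and the five remaining rising-sun
vertices.  Here the `inl` vertices are the gadget clique `v_1 … v_k` (0-based),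
`inr (inl a)` is the gadget independent vertex `w_{a+1}`, and `inr (inr t)` for
`t = 0,…,4` are `d1`, `d2`, `x1`, `x2`, `x3` of the rising sun. -/
def S2 (k : ℕ) : SimpleGraph (Fin k ⊕ (Fin (k - 1) ⊕ Fin 5)) :=
  SimpleGraph.fromRel (fun x y =>
    match x, y with
    | Sum.inl _, Sum.inl _ => True
    | Sum.inr (Sum.inl a), Sum.inl b => b.val ≠ a.val ∧ b.val ≠ a.val + 1
    | Sum.inr (Sum.inr t), Sum.inl b =>
        t = 0 ∨ t = 1 ∨ (t = 2 ∧ b.val + 1 ≠ k) ∨ t = 3 ∨ (t = 4 ∧ b.val ≠ 0)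
    | Sum.inr (Sum.inr t), Sum.inr (Sum.inr t') =>
        (t = 0 ∧ t' = 1) ∨ (t = 0 ∧ t' = 2) ∨ (t = 1 ∧ t' = 4)
    | _, _ => False)

/-- The graph `F1` on 10 vertices: a clique `{0,1,2,3}` (= `v0,…,v3`), vertices
`x1 = 4, x2 = 5, x3 = 6` where `x_i` is adjacent exactly to `v0` and the two `v_j`
with `j ∈ {1,2,3} \ {i}`, and vertices `w1 = 7, w2 = 8, w3 = 9` where `w_i` is
adjacent exactly to the two `v_j` with `j ∈ {1,2,3} \ {i}`. -/
def F1 : SimpleGraph (Fin 10) :=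
  SimpleGraph.fromRel (fun a b =>
    (a.val < 4 ∧ b.val < 4) ∨
    (a = 4 ∧ (b = 0 ∨ b = 2 ∨ b = 3)) ∨
    (a = 5 ∧ (b = 0 ∨ b = 1 ∨ b = 3)) ∨
    (a = 6 ∧ (b = 0 ∨ b = 1 ∨ b = 2)) ∨
    (a = 7 ∧ (b = 2 ∨ b = 3)) ∨
    (a = 8 ∧ (b = 1 ∨ b = 3)) ∨
    (a = 9 ∧ (b = 1 ∨ b = 2)))

/-- The graph `F2` on 9 vertices: a clique `{0,1,2,3}` (= `v0,…,v3`) together with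
`x1 = 4` adjacent exactly to `v2, v3`; `x2 = 5` adjacent exactly to `v0, v1, v3`;
`x3 = 6` adjacent exactly to `v1, v2`; `w1 = 7` adjacent exactly to `v3`; and
`w2 = 8` adjacent exactly to `v1`. -/
def F2 : SimpleGraph (Fin 9) :=
  SimpleGraph.fromRel (fun a b =>
    (a.val < 4 ∧ b.val < 4) ∨
    (a = 4 ∧ (b = 2 ∨ b = 3)) ∨
    (a = 5 ∧ (b = 0 ∨ b = 1 ∨ b = 3)) ∨
    (a = 6 ∧ (b = 1 ∨ b = 2)) ∨
    (a = 7 ∧ b = 3) ∨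
    (a = 8 ∧ b = 1))

/-- The net plus an isolated vertex: triangle `0,1,2`, pendant vertices `3,4,5`
attached to `0,1,2` respectively, and an isolated vertex `6`. -/
def netStar : SimpleGraph (Fin 7) :=
  SimpleGraph.fromRel (fun a b =>
    (a = 0 ∧ b = 1) ∨ (a = 0 ∧ b = 2) ∨ (a = 1 ∧ b = 2) ∨
    (a = 3 ∧ b = 0) ∨ (a = 4 ∧ b = 1) ∨ (a = 5 ∧ b = 2))

/-- The graph `W`: the complement of the 4-sun — a clique `0,1,2,3` (= `v1,…,v4`)
plus an independent set `4,5,6,7` (= `u1,…,u4`) with `u_i` adjacent exactly to `v_i`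
and `v_{i+1 mod 4}` — together with a new vertex `8` adjacent exactly to `v1 = 0` and
`v3 = 2`. -/
def Wgraph : SimpleGraph (Fin 9) :=
  SimpleGraph.fromRel (fun a b =>
    (a.val < 4 ∧ b.val < 4) ∨
    (4 ≤ a.val ∧ a.val ≤ 7 ∧ (b.val = a.val - 4 ∨ b.val = (a.val - 4 + 1) % 4)) ∨
    (a = 8 ∧ (b = 0 ∨ b = 2)))

/-- A clique path of a graph `H`: a linear ordering `K_1, …, K_len` of all maximal
cliques of `H` such that for every vertex the cliques containing it are consecutive.
Indices outside `[1, len]` carry the empty set (sentinels). -/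
structure CliquePath (H : SimpleGraph V) where
  len : ℕ
  Kc : ℕ → Set V
  sentinel : ∀ i : ℕ, (i = 0 ∨ len < i) → Kc i = ∅
  maxclique : ∀ i : ℕ, 1 ≤ i → i ≤ len → IsMaxCliqueSet H (Kc i)
  surj : ∀ C : Set V, IsMaxCliqueSet H C → ∃ i, 1 ≤ i ∧ i ≤ len ∧ Kc i = C
  inj : ∀ i j : ℕ, 1 ≤ i → i ≤ len → 1 ≤ j → j ≤ len → Kc i = Kc j → i = j
  consec : ∀ (v : V) (i j k : ℕ), i ≤ j → j ≤ k → v ∈ Kc i → v ∈ Kc k → v ∈ Kc j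

/-- A module of a graph: every vertex outside is adjacent to all of it or none of it. -/
def GraphModule (H : SimpleGraph V) (M : Set V) : Prop :=
  ∀ u ∈ M, ∀ v ∈ M, ∀ x ∉ M, (H.Adj x u ↔ H.Adj x v)

/-- A graph is quasi-prime if every nontrivial module is a clique. -/
def QuasiPrime (H : SimpleGraph V) : Prop :=
  ∀ M : Set V, GraphModule H M → M ≠ Set.univ → ¬ M.Subsingleton → H.IsClique M


/-! The vertices of the independent side of a split partition are simplicial. If no vertex of
a maximal clique `C` is simplicial, then `C` lies in the clique side of every split partition,
hence equals it by maximality, and the partition is unique. Conversely, let `K ⊎ S` be a split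
partition. If some `w ∈ S` is adjacent to all of `K`, moving `w` to the clique side gives a
second partition. Otherwise `K` is a maximal clique; the closed neighbourhood of a simplicial
`v ∈ K` is then a clique containing `K`, so `v` has no neighbour in `S` and can be moved to the
independent side. -/

lemma IsSimplicial.closedNbhd_eq {G : SimpleGraph V} {C : Set V} {v : V}
    (hv : IsSimplicial G v) (hC : IsMaxCliqueSet G C) (hvC : v ∈ C) : closedNbhd G v = C := by
  refine (hC.2 _ hv fun u huC => ?_).symm
  by_cases huv : u = v
  · exact Or.inl huv
  · exact Or.inr (hC.1 hvC huC (Ne.symm huv))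

namespace IsSplitPartition

variable {G : SimpleGraph V} {K S : Set V}

lemma compl_fst (h : IsSplitPartition G K S) : Kᶜ = S :=
  IsCompl.compl_eq ⟨h.2.1, codisjoint_iff.mpr h.1⟩

lemma mem_or_mem (h : IsSplitPartition G K S) (x : V) : x ∈ K ∨ x ∈ S :=
  (Set.eq_univ_iff_forall.mp h.1 x : x ∈ K ∪ S)

lemma mem_fst_of_adj (h : IsSplitPartition G K S) {s u : V} (hs : s ∈ S) (hsu : G.Adj s u) :
    u ∈ K :=
  (h.mem_or_mem u).resolve_right fun hu => h.2.2.2 hs hu hsu.ne hsu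

lemma isSimplicial_of_mem_snd (h : IsSplitPartition G K S) {s : V} (hs : s ∈ S) :
    IsSimplicial G s :=
  (h.2.2.1.subset fun _ => h.mem_fst_of_adj hs).insert fun _ hu _ => hu

lemma mem_fst_of_not_isSimplicial (h : IsSplitPartition G K S) {v : V}
    (hv : ¬ IsSimplicial G v) : v ∈ K :=
  (h.mem_or_mem v).resolve_right fun hs => hv (h.isSimplicial_of_mem_snd hs)

lemma eq_of_fst_eq {K' S' : Set V} (h : IsSplitPartition G K S) (h' : IsSplitPartition G K' S')
    (hK : K = K') : (K, S) = (K', S') := by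
  rw [← h.compl_fst, ← h'.compl_fst, hK]

lemma isMaxCliqueSet_fst (h : IsSplitPartition G K S)
    (hS : ∀ w ∈ S, ∃ u ∈ K, ¬ G.Adj w u) : IsMaxCliqueSet G K := by
  refine ⟨h.2.2.1, fun C hC hKC => hKC.antisymm fun x hxC => ?_⟩
  by_contra hxK
  obtain ⟨u, huK, hxu⟩ := hS x ((h.mem_or_mem x).resolve_left hxK)
  exact hxu (hC hxC (hKC huK) (ne_of_mem_of_not_mem huK hxK).symm)

lemma insert_sdiff (h : IsSplitPartition G K S) {w : V}
    (hwK : ∀ u ∈ K, G.Adj w u) : IsSplitPartition G (insert w K) (S \ {w}) := by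
  refine ⟨?_, Set.disjoint_insert_left.mpr ⟨fun hw' => hw'.2 rfl, h.2.1.mono_right
    Set.sdiff_subset⟩, h.2.2.1.insert fun u hu _ => hwK u hu, fun a ha b hb => h.2.2.2 ha.1 hb.1⟩
  refine Set.eq_univ_of_forall fun x => ?_
  by_cases hxw : x = w
  · exact Or.inl (Or.inl hxw)
  · exact (h.mem_or_mem x).imp Or.inr fun hx => ⟨hx, hxw⟩

lemma sdiff_insert (h : IsSplitPartition G K S) {v : V} (hv : v ∈ K)
    (hvS : ∀ s ∈ S, ¬ G.Adj v s) : IsSplitPartition G (K \ {v}) (insert v S) := by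
  refine ⟨?_, Set.disjoint_insert_right.mpr ⟨fun hv' => hv'.2 rfl, h.2.1.mono_left
    Set.sdiff_subset⟩, h.2.2.1.subset Set.sdiff_subset, ?_⟩
  · refine Set.eq_univ_of_forall fun x => ?_
    by_cases hxv : x = v
    · exact Or.inr (Or.inl hxv)
    · exact (h.mem_or_mem x).imp (fun hx => ⟨hx, hxv⟩) Or.inr
  · rintro a (rfl | ha) b (rfl | hb) hab hadj
    · exact hab rfl
    · exact hvS b hb hadj
    · exact hvS a ha hadj.symm
    · exact h.2.2.2 ha hb hab hadj

theorem ambiguous_of_forall_exists_isSimplicial (h : IsSplitPartition G K S)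
    (hsimp : ∀ C : Set V, IsMaxCliqueSet G C → ∃ v ∈ C, IsSimplicial G v) : Ambiguous G := by
  by_cases hw : ∃ w ∈ S, ∀ u ∈ K, G.Adj w u
  · obtain ⟨w, hwS, hwK⟩ := hw
    have hwK' : w ∉ K := Set.disjoint_right.mp h.2.1 hwS
    exact ⟨K, S, _, _, h, h.insert_sdiff hwK,
      ne_of_apply_ne Prod.fst (Set.insert_ne_self.mpr hwK').symm⟩
  · push Not at hw
    have hK := h.isMaxCliqueSet_fst hw
    obtain ⟨v, hvK, hv⟩ := hsimp K hK
    have hvS : ∀ s ∈ S, ¬ G.Adj v s := fun s hs hvs =>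
      Set.disjoint_right.mp h.2.1 hs (hv.closedNbhd_eq hK hvK ▸ Or.inr hvs)
    exact ⟨K, S, _, _, h, h.sdiff_insert hvK hvS,
      ne_of_apply_ne Prod.fst fun (hK' : K = K \ {v}) => (hK' ▸ hvK : v ∈ K \ {v}).2 rfl⟩

end IsSplitPartition

theorem Ambiguous.exists_isSimplicial {G : SimpleGraph V} {C : Set V} (h : Ambiguous G)
    (hC : IsMaxCliqueSet G C) : ∃ v ∈ C, IsSimplicial G v := by
  obtain ⟨K₁, S₁, K₂, S₂, h₁, h₂, hne⟩ := h
  by_contra! hC_not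
  have hC₁ : C = K₁ := hC.2 K₁ h₁.2.2.1 fun v hv => h₁.mem_fst_of_not_isSimplicial (hC_not v hv)
  have hC₂ : C = K₂ := hC.2 K₂ h₂.2.2.1 fun v hv => h₂.mem_fst_of_not_isSimplicial (hC_not v hv)
  exact hne (h₁.eq_of_fst_eq h₂ (hC₁.symm.trans hC₂))

theorem statement6_general {V : Type*} (G : SimpleGraph V) (hG : IsSplitGraph G) :
    Ambiguous G ↔ ∀ C : Set V, IsMaxCliqueSet G C → ∃ v ∈ C, IsSimplicial G v := by
  obtain ⟨K, S, hP⟩ := hG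
  exact ⟨fun h _ hC => h.exists_isSimplicial hC, hP.ambiguous_of_forall_exists_isSimplicial⟩

/-- A split graph `G` is ambiguous iff every maximal clique of `G`
contains a simplicial vertex. -/
theorem statement6 {V : Type*} [Fintype V] (G : SimpleGraph V) (hG : IsSplitGraph G) :
    Ambiguous G ↔ ∀ C : Set V, IsMaxCliqueSet G C → ∃ v ∈ C, IsSimplicial G v :=
  statement6_general G hG

end CAG
end

section
/- Let G be a split graph with split partition K ⊎ S and with no universal vertex. Then the auxiliary graph G^K contains an induced sun if and only if G contains an induced copy of the complement of the 3-sun. -/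
/-!
For `v ∈ K` and `u ∉ K`, adjacency in `G^K` is the negation of adjacency in `G`; outside `K`
both graphs are edgeless, and two vertices of `K` are adjacent in `G^K` iff some vertex outside
`K` misses both. Hence an induced net of `G` (a triangle `tᵢ` in `K` with pendants `pᵢ ∉ K`,
`tᵢ ~ pⱼ ⇔ i = j`) is, read in `G^K`, an induced sun (`tᵢ ~ pⱼ ⇔ i ≠ j`, each edge of the
triangle being witnessed by the third pendant). Conversely, the triangle of a sun of `G^K` lies
in `K`, because the `G^K`-neighbourhood of a vertex outside `K` is a clique; and each triangle
vertex gets a private neighbour outside `K` unless the witnesses of the sun's edges already form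
a net.
-/

namespace CAG

variable {V : Type*}

open SimpleGraph

theorem fin_three_eq_or_eq_add_one_or_eq_add_two (i j : Fin 3) :
    j = i ∨ j = i + 1 ∨ j = i + 2 := by
  revert i j; decide

theorem sunGraph_adj_inl_inl {k : ℕ} {i j : Fin k} :
    (sunGraph k).Adj (.inl i) (.inl j) ↔ i ≠ j := by
  simp [sunGraph]

theorem not_sunGraph_adj_inr_inr {k : ℕ} (i j : Fin k) :
    ¬ (sunGraph k).Adj (.inr i) (.inr j) := by
  simp [sunGraph]

theorem sunGraph_three_adj_inl_inr {i j : Fin 3} :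
    (sunGraph 3).Adj (.inl i) (.inr j) ↔ j ≠ i + 1 := by
  simp only [sunGraph, fromRel_adj, ne_eq, reduceCtorEq, not_false_eq_true, or_false, true_and]
  revert i j; decide

theorem compl_sunGraph_three_adj_inl_inr {i j : Fin 3} :
    (sunGraph 3)ᶜ.Adj (.inl i) (.inr j) ↔ j = i + 1 := by
  simp [sunGraph_three_adj_inl_inr]

def sunGraph3IsoSunF : sunGraph 3 ≃g sunF where
  toEquiv := finSumFinEquiv
  map_rel_iff' := by
    rintro (i | i) (j | j) <;> fin_cases i <;> fin_cases j <;> simp [sunF, sunGraph] <;> decide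

theorem inducedCopy_congr_left {W W' : Type*} {F : SimpleGraph W} {F' : SimpleGraph W'}
    (φ : F ≃g F') (H : SimpleGraph V) : InducedCopy F H ↔ InducedCopy F' H :=
  ⟨fun ⟨e⟩ => ⟨e.comp φ.symm.toEmbedding⟩, fun ⟨e⟩ => ⟨e.comp φ.toEmbedding⟩⟩

section SplitPartition

variable {G : SimpleGraph V} {K S : Set V} {u v w : V}

theorem IsSplitPartition.isClique (h : IsSplitPartition G K S) : G.IsClique K := h.2.2.1

theorem IsSplitPartition.mem_right (h : IsSplitPartition G K S) (hv : v ∉ K) : v ∈ S :=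
  (h.1.symm ▸ Set.mem_univ v : v ∈ K ∪ S).resolve_left hv

theorem IsSplitPartition.not_adj (h : IsSplitPartition G K S) (hu : u ∉ K) (hv : v ∉ K) :
    ¬ G.Adj u v :=
  fun huv => h.2.2.2 (h.mem_right hu) (h.mem_right hv) huv.ne huv

theorem IsSplitPartition.mem_of_adj (h : IsSplitPartition G K S) (huv : G.Adj u v)
    (hv : v ∉ K) : u ∈ K := by
  by_contra hu
  exact h.not_adj hu hv huv

theorem IsSplitPartition.not_mem_of_not_adj (h : IsSplitPartition G K S) (huv : G.Adj u v)
    (hwu : ¬ G.Adj w u) (hwv : ¬ G.Adj w v) (hwu' : w ≠ u) (hwv' : w ≠ v) : w ∉ K := by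
  intro hw
  have hu : u ∉ K := fun hu => hwu (h.isClique hw hu hwu')
  have hv : v ∉ K := fun hv => hwv (h.isClique hw hv hwv')
  exact h.not_adj hu hv huv

theorem IsSplitPartition.closedNbhd_subset_iff (h : IsSplitPartition G K S) (hv : v ∈ K)
    (hu : u ∉ K) : closedNbhd G u ⊆ closedNbhd G v ↔ G.Adj v u := by
  refine ⟨fun hsub => ?_, fun hvu x hx => ?_⟩
  · rcases hsub (Set.mem_insert u _) with rfl | hvu
    · exact absurd hv hu
    · exact hvu
  · rcases hx with rfl | hux
    · exact Or.inr hvu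
    · have hx : x ∈ K := h.mem_of_adj hux.symm hu
      rcases eq_or_ne x v with rfl | hxv
      · exact Set.mem_insert x _
      · exact Or.inr (h.isClique hv hx hxv.symm)

theorem IsSplitPartition.auxGraph_adj_iff_not_adj (h : IsSplitPartition G K S) (hv : v ∈ K)
    (hu : u ∉ K) : (auxGraph G K).Adj v u ↔ ¬ G.Adj v u := by
  rw [← h.closedNbhd_subset_iff hv hu]
  refine ⟨?_, fun hsub => ⟨fun hvu => hu (hvu ▸ hv), .inr (.inr (.inl ⟨hv, hu, hsub⟩))⟩⟩
  rintro ⟨-, ⟨-, hu', -⟩ | ⟨hv', -⟩ | ⟨-, -, hsub⟩ | ⟨hu', -⟩⟩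
  exacts [absurd hu' hu, absurd hv hv', hsub, absurd hu' hu]

theorem IsSplitPartition.not_auxGraph_adj (h : IsSplitPartition G K S) (hu : u ∉ K)
    (hv : v ∉ K) : ¬ (auxGraph G K).Adj u v := by
  rintro ⟨-, ⟨hu', -⟩ | ⟨-, -, huv⟩ | ⟨hu', -⟩ | ⟨hv', -⟩⟩
  exacts [hu hu', h.not_adj hu hv huv, hu hu', hv hv']

theorem auxGraph_adj_iff_exists_not_adj (hK : G.IsClique K) (hu : u ∈ K) (hv : v ∈ K)
    (huv : u ≠ v) :
    (auxGraph G K).Adj u v ↔ ∃ s ∉ K, ¬ G.Adj u s ∧ ¬ G.Adj v s := by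
  constructor
  · rintro ⟨-, ⟨-, -, hN⟩ | ⟨hu', -⟩ | ⟨-, hv', -⟩ | ⟨-, hu', -⟩⟩
    · obtain ⟨s, hs⟩ := (Set.ne_univ_iff_exists_notMem _).1 hN
      simp only [Set.mem_union, mem_neighborSet, not_or] at hs
      refine ⟨s, fun hsK => ?_, hs⟩
      rcases eq_or_ne s u with rfl | hsu
      · exact hs.2 (hK hv hsK huv.symm)
      · exact hs.1 (hK hu hsK hsu.symm)
    exacts [absurd hu hu', absurd hv hv', absurd hu hu']
  · rintro ⟨s, -, hus, hvs⟩
    refine ⟨huv, .inl ⟨hu, hv, fun hN => ?_⟩⟩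
    rcases (hN ▸ Set.mem_univ s : s ∈ G.neighborSet u ∪ G.neighborSet v) with h | h
    exacts [hus h, hvs h]

theorem adj_or_adj_of_not_auxGraph_adj (hK : G.IsClique K) (hu : u ∈ K) (hv : v ∈ K)
    (huv : u ≠ v) (hna : ¬ (auxGraph G K).Adj u v) : ∀ s ∉ K, G.Adj u s ∨ G.Adj v s := by
  intro s hs
  by_contra! hnot
  exact hna ((auxGraph_adj_iff_exists_not_adj hK hu hv huv).2 ⟨s, hs, hnot⟩)

theorem IsSplitPartition.isClique_auxGraph_neighborSet (h : IsSplitPartition G K S)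
    (hv : v ∉ K) : (auxGraph G K).IsClique ((auxGraph G K).neighborSet v) := by
  intro a ha b hb hab
  have haK : a ∈ K := by_contra fun haK => h.not_auxGraph_adj hv haK ha
  have hbK : b ∈ K := by_contra fun hbK => h.not_auxGraph_adj hv hbK hb
  exact (auxGraph_adj_iff_exists_not_adj h.isClique haK hbK hab).2
    ⟨v, hv, (h.auxGraph_adj_iff_not_adj haK hv).1 ha.symm,
      (h.auxGraph_adj_iff_not_adj hbK hv).1 hb.symm⟩

end SplitPartition

/-- `t` is a triangle in `K` and `p i ∉ K` is a neighbour of `t i` only: in a split graph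
with clique `K`, these six vertices induce the net `\overline{S_3}`. -/
structure IsNet (G : SimpleGraph V) (K : Set V) (t p : Fin 3 → V) : Prop where
  mem : ∀ i, t i ∈ K
  not_mem : ∀ i, p i ∉ K
  adj_iff : ∀ i j, G.Adj (t i) (p j) ↔ i = j

section Net

variable {G : SimpleGraph V} {K S : Set V} {t p : Fin 3 → V}

theorem IsNet.injective_left (hN : IsNet G K t p) : Function.Injective t :=
  fun i j hij => ((hN.adj_iff j i).1 (hij ▸ (hN.adj_iff i i).2 rfl)).symm

theorem IsNet.injective_right (hN : IsNet G K t p) : Function.Injective p :=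
  fun i j hij => (hN.adj_iff i j).1 (hij ▸ (hN.adj_iff i i).2 rfl)

theorem IsNet.inducedCopy_compl_sunGraph (h : IsSplitPartition G K S) (hN : IsNet G K t p) :
    InducedCopy (sunGraph 3)ᶜ G := by
  refine ⟨⟨⟨Sum.elim (fun i => p (i + 1)) t,
    (hN.injective_right.comp (add_left_injective 1)).sumElim hN.injective_left
      fun i j hij => hN.not_mem _ (hij ▸ hN.mem j)⟩, ?_⟩⟩
  rintro (i | i) (j | j) <;>
    simp only [Function.Embedding.coeFn_mk, Sum.elim_inl, Sum.elim_inr]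
  · simp [compl_adj, sunGraph_adj_inl_inl, h.not_adj (hN.not_mem _) (hN.not_mem _)]
  · rw [G.adj_comm, hN.adj_iff, compl_sunGraph_three_adj_inl_inr]
  · rw [hN.adj_iff, (sunGraph 3)ᶜ.adj_comm, compl_sunGraph_three_adj_inl_inr, eq_comm]
  · simp only [compl_adj, ne_eq, Sum.inr.injEq, not_sunGraph_adj_inr_inr, not_false_eq_true,
      and_true]
    exact ⟨fun hij => hN.injective_left.ne_iff.1 hij.ne,
      fun hij => h.isClique (hN.mem i) (hN.mem j) (hN.injective_left.ne hij)⟩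

theorem IsNet.inducedCopy_sunGraph_auxGraph (h : IsSplitPartition G K S) (hN : IsNet G K t p) :
    InducedCopy (sunGraph 3) (auxGraph G K) := by
  refine ⟨⟨⟨Sum.elim t (fun j => p (j - 1)),
    hN.injective_left.sumElim (hN.injective_right.comp (sub_left_injective (b := 1)))
      fun i j hij => hN.not_mem _ (hij ▸ hN.mem i)⟩, ?_⟩⟩
  have hKp : ∀ i j, (auxGraph G K).Adj (t i) (p (j - 1)) ↔ (sunGraph 3).Adj (.inl i) (.inr j) :=
    fun i j => by
      rw [h.auxGraph_adj_iff_not_adj (hN.mem i) (hN.not_mem _), hN.adj_iff,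
        sunGraph_three_adj_inl_inr, eq_sub_iff_add_eq, eq_comm]
  rintro (i | i) (j | j) <;>
    simp only [Function.Embedding.coeFn_mk, Sum.elim_inl, Sum.elim_inr]
  · rw [sunGraph_adj_inl_inl]
    refine ⟨fun hij => hN.injective_left.ne_iff.1 hij.ne, fun hij => ?_⟩
    obtain ⟨k, hki, hkj⟩ : ∃ k : Fin 3, k ≠ i ∧ k ≠ j := by revert i j; decide
    exact (auxGraph_adj_iff_exists_not_adj h.isClique (hN.mem i) (hN.mem j)
      (hN.injective_left.ne hij)).2 ⟨p k, hN.not_mem k,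
        fun hik => hki ((hN.adj_iff i k).1 hik).symm, fun hjk => hkj ((hN.adj_iff j k).1 hjk).symm⟩
  · exact hKp i j
  · rw [(auxGraph G K).adj_comm, (sunGraph 3).adj_comm, hKp]
  · exact iff_of_false (h.not_auxGraph_adj (hN.not_mem _) (hN.not_mem _))
      (not_sunGraph_adj_inr_inr i j)

theorem IsSplitPartition.exists_isNet_of_inducedCopy_compl_sunGraph
    (h : IsSplitPartition G K S) (hG : InducedCopy (sunGraph 3)ᶜ G) : ∃ t p, IsNet G K t p := by
  obtain ⟨e⟩ := hG
  set t : Fin 3 → V := fun i => e (.inr i)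
  set p : Fin 3 → V := fun i => e (.inl (i - 1))
  have hadj : ∀ i j, G.Adj (t i) (p j) ↔ i = j := fun i j => by
    rw [e.map_adj_iff, (sunGraph 3)ᶜ.adj_comm, compl_sunGraph_three_adj_inl_inr, sub_add_cancel]
  have hp : ∀ i, p i ∉ K := fun i => by
    refine h.not_mem_of_not_adj (u := t (i + 1)) (v := t (i + 2)) ?_
      (fun hc => ?_) (fun hc => ?_) (e.injective.ne Sum.inl_ne_inr) (e.injective.ne Sum.inl_ne_inr)
    · simp [t, e.map_adj_iff, compl_adj, not_sunGraph_adj_inr_inr]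
    · simpa using (hadj _ _).1 hc.symm
    · simpa using (hadj _ _).1 hc.symm
  exact ⟨t, p, fun i => h.mem_of_adj ((hadj i i).2 rfl) (hp i), hp, hadj⟩

/-- If `x` has no private neighbour, the vertices outside `K` witnessing the edges `wu`, `wv`,
`uv` of `G^K` are private neighbours of `v`, `u`, `w`, so that `w, u, v` carry a net. -/
theorem IsSplitPartition.exists_isNet_or_exists_private_neighbor (h : IsSplitPartition G K S)
    {u v w x : V} (hu : u ∈ K) (hv : v ∈ K) (hx : x ∈ K) (huv : (auxGraph G K).Adj u v)
    (hwu : (auxGraph G K).Adj w u) (hwv : (auxGraph G K).Adj w v)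
    (hwx : ¬ (auxGraph G K).Adj w x) (hwx' : w ≠ x) :
    (∃ t p, IsNet G K t p) ∨ ∃ s ∉ K, G.Adj x s ∧ ¬ G.Adj u s ∧ ¬ G.Adj v s := by
  by_cases hw : w ∈ K
  swap
  · exact .inr ⟨w, hw, not_not.1 fun hxw => hwx ((h.auxGraph_adj_iff_not_adj hx hw).2 hxw).symm,
      (h.auxGraph_adj_iff_not_adj hu hw).1 hwu.symm, (h.auxGraph_adj_iff_not_adj hv hw).1 hwv.symm⟩
  have hK := h.isClique
  obtain ⟨s₁, hs₁, hws₁, hus₁⟩ := (auxGraph_adj_iff_exists_not_adj hK hw hu hwu.ne).1 hwu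
  obtain ⟨s₂, hs₂, hws₂, hvs₂⟩ := (auxGraph_adj_iff_exists_not_adj hK hw hv hwv.ne).1 hwv
  obtain ⟨s₃, hs₃, hus₃, hvs₃⟩ := (auxGraph_adj_iff_exists_not_adj hK hu hv huv.ne).1 huv
  have hcover := adj_or_adj_of_not_auxGraph_adj hK hw hx hwx' hwx
  by_cases hvs₁ : G.Adj v s₁
  swap
  · exact .inr ⟨s₁, hs₁, (hcover s₁ hs₁).resolve_left hws₁, hus₁, hvs₁⟩
  by_cases hus₂ : G.Adj u s₂
  swap
  · exact .inr ⟨s₂, hs₂, (hcover s₂ hs₂).resolve_left hws₂, hus₂, hvs₂⟩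
  by_cases hxs₃ : G.Adj x s₃
  · exact .inr ⟨s₃, hs₃, hxs₃, hus₃, hvs₃⟩
  have hws₃ := (hcover s₃ hs₃).resolve_right hxs₃
  refine .inl ⟨![w, u, v], ![s₃, s₂, s₁], ?_, ?_, ?_⟩
  · intro i; fin_cases i <;> assumption
  · intro i; fin_cases i <;> assumption
  · intro i j; fin_cases i <;> fin_cases j <;> simp [*]

theorem IsSplitPartition.exists_isNet_of_inducedCopy_sunGraph_auxGraph
    (h : IsSplitPartition G K S) (hG : InducedCopy (sunGraph 3) (auxGraph G K)) :
    ∃ t p, IsNet G K t p := by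
  obtain ⟨e⟩ := hG
  set u : Fin 3 → V := fun i => e (.inl i)
  set w : Fin 3 → V := fun j => e (.inr j)
  have huu : ∀ i j, (auxGraph G K).Adj (u i) (u j) ↔ i ≠ j := fun i j => by
    rw [e.map_adj_iff, sunGraph_adj_inl_inl]
  have hwu : ∀ i j, (auxGraph G K).Adj (w j) (u i) ↔ j ≠ i + 1 := fun i j => by
    rw [e.map_adj_iff, (sunGraph 3).adj_comm, sunGraph_three_adj_inl_inr]
  have hwu' : ∀ i j, w j ≠ u i := fun i j => e.injective.ne Sum.inr_ne_inl
  -- `u i` is the middle vertex of the induced path `w (i+2), u i, u (i+1)` of `G^K`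
  have hu : ∀ i, u i ∈ K := fun i => by
    by_contra hi
    have := h.isClique_auxGraph_neighborSet hi (((hwu i (i + 2)).2 (by simp)).symm)
      ((huu i (i + 1)).2 (by simp)) (hwu' _ _)
    simp [hwu, add_assoc] at this
  have hpriv : ∀ i, (∃ t p, IsNet G K t p) ∨
      ∃ s ∉ K, G.Adj (u i) s ∧ ¬ G.Adj (u (i + 1)) s ∧ ¬ G.Adj (u (i + 2)) s := fun i =>
    h.exists_isNet_or_exists_private_neighbor (w := w (i + 1)) (hu _) (hu _) (hu _)
      ((huu _ _).2 (by simp)) ((hwu _ _).2 (by simp)) ((hwu _ _).2 (by simp))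
      (by simp [hwu]) (hwu' _ _)
  by_cases hnet : ∃ t p, IsNet G K t p
  · exact hnet
  choose p hpK hp using fun i => (hpriv i).resolve_left hnet
  refine ⟨u, p, hu, hpK, fun i j => ?_⟩
  rcases fin_three_eq_or_eq_add_one_or_eq_add_two j i with rfl | rfl | rfl <;> simp [hp]

theorem IsSplitPartition.inducedCopy_sunGraph_auxGraph_iff (h : IsSplitPartition G K S) :
    InducedCopy (sunGraph 3) (auxGraph G K) ↔ ∃ t p, IsNet G K t p :=
  ⟨h.exists_isNet_of_inducedCopy_sunGraph_auxGraph,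
    fun ⟨_, _, hN⟩ => hN.inducedCopy_sunGraph_auxGraph h⟩

theorem IsSplitPartition.inducedCopy_compl_sunGraph_iff (h : IsSplitPartition G K S) :
    InducedCopy (sunGraph 3)ᶜ G ↔ ∃ t p, IsNet G K t p :=
  ⟨h.exists_isNet_of_inducedCopy_compl_sunGraph,
    fun ⟨_, _, hN⟩ => hN.inducedCopy_compl_sunGraph h⟩

end Net

theorem statement10_general {V : Type*} (G : SimpleGraph V) (K S : Set V)
    (hKS : IsSplitPartition G K S) :
    InducedCopy sunF (auxGraph G K) ↔ InducedCopy (sunGraph 3)ᶜ G := by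
  rw [← inducedCopy_congr_left sunGraph3IsoSunF, hKS.inducedCopy_sunGraph_auxGraph_iff,
    hKS.inducedCopy_compl_sunGraph_iff]

/-- Let `G` be a split graph with split partition `K ⊎ S` and no
universal vertex.  Then `G^K` contains an induced sun iff `G` contains an induced
copy of the complement of the 3-sun. -/
theorem statement10 {V : Type*} [Fintype V] (G : SimpleGraph V) (K S : Set V)
    (hKS : IsSplitPartition G K S) (hu : ¬ HasUniversalVertex G) :
    InducedCopy sunF (auxGraph G K) ↔ InducedCopy (sunGraph 3)ᶜ G :=
  statement10_general G K S hKS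

end CAG
end

section
/- Let ⟨K_1,…,K_ℓ⟩ be a clique path of an interval graph H, and set K_0 = K_{ℓ+1} = ∅. If H is quasi-prime, then there do not exist indices p < q with [p, q] a proper subinterval of [1, ℓ] such that both K_{p−1} ∩ K_p \ K_q and K_q ∩ K_{q+1} \ K_p are empty. -/
namespace CAG

variable {V : Type*}

/-! Suppose `p < q` violate the claim and put `A = K_p ∩ K_q`. The vertices lying in some
`K_i` with `p ≤ i ≤ q` but not in `A` form a module: every vertex of `A` lies in all of
`K_p, …, K_q` and so sees all of them, while a neighbour outside `K_p ∪ … ∪ K_q` would share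
a clique `K_j` with `j < p` or `j > q`, and the emptiness hypotheses would then force its
neighbour into `A`. The module contains `K_p \ K_q` and `K_q \ K_p`, and properness of
`[p, q]` leaves a vertex outside it, so quasi-primality makes it a clique. Then
`K_p ∪ … ∪ K_q` is a clique and, by maximality, equals both `K_p` and `K_q`. -/

theorem exists_isMaxCliqueSet_superset (H : SimpleGraph V) {s : Set V} (hs : H.IsClique s) :
    ∃ C, IsMaxCliqueSet H C ∧ s ⊆ C := by
  obtain ⟨C, hsC, hC⟩ := zorn_subset_nonempty {C | H.IsClique C}
    (fun c hcliques hchain _ => ⟨⋃₀ c, hchain.pairwise_sUnion.2 hcliques, fun _ => Set.subset_sUnion_of_mem⟩)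
    s hs
  exact ⟨C, ⟨hC.prop, fun C' hC' hCC' => hC.eq_of_subset hC' hCC'⟩, hsC⟩

namespace CliquePath

variable {H : SimpleGraph V} (cp : CliquePath H)

def segment (p q : ℕ) : Set V := ⋃ i ∈ Set.Icc p q, cp.Kc i

variable {cp}

theorem mem_segment {p q : ℕ} {x : V} : x ∈ cp.segment p q ↔ ∃ i, p ≤ i ∧ i ≤ q ∧ x ∈ cp.Kc i := by
  simp [segment, and_assoc]

theorem one_le_and_le_len_of_mem {i : ℕ} {x : V} (hx : x ∈ cp.Kc i) : 1 ≤ i ∧ i ≤ cp.len := by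
  by_contra h
  rw [cp.sentinel i (by omega)] at hx
  exact hx

variable (cp) in
theorem isClique_Kc (i : ℕ) : H.IsClique (cp.Kc i) := fun _ hx =>
  let ⟨h₁, h₂⟩ := one_le_and_le_len_of_mem hx
  (cp.maxclique i h₁ h₂).1 hx

theorem exists_mem_Kc_of_adj {x u : V} (h : H.Adj x u) : ∃ j, x ∈ cp.Kc j ∧ u ∈ cp.Kc j := by
  obtain ⟨C, hC, hxuC⟩ := exists_isMaxCliqueSet_superset H (SimpleGraph.isClique_pair.2 fun _ => h)
  obtain ⟨j, -, -, rfl⟩ := cp.surj C hC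
  exact ⟨j, hxuC (Set.mem_insert x _), hxuC (Set.mem_insert_of_mem x rfl)⟩

theorem nonempty_Kc_sdiff {i j : ℕ} (hi : 1 ≤ i) (hi' : i ≤ cp.len) (hj : 1 ≤ j)
    (hj' : j ≤ cp.len) (hij : i ≠ j) : (cp.Kc i \ cp.Kc j).Nonempty := by
  rw [Set.nonempty_iff_ne_empty, Ne, Set.sdiff_eq_empty]
  exact fun hsub => hij (cp.inj i j hi hi' hj hj' ((cp.maxclique i hi hi').2 _ (cp.isClique_Kc j) hsub))

section segment

variable {p q : ℕ}

theorem adj_of_mem_inter {x u : V} (hx : x ∈ cp.Kc p ∩ cp.Kc q)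
    (hu : u ∈ cp.segment p q \ (cp.Kc p ∩ cp.Kc q)) : H.Adj x u := by
  obtain ⟨i, hpi, hiq, hui⟩ := mem_segment.1 hu.1
  exact cp.isClique_Kc i (cp.consec x p i q hpi hiq hx.1 hx.2) hui
    (by rintro rfl; exact hu.2 hx)

theorem not_adj_of_not_mem_segment (hleft : cp.Kc (p - 1) ∩ cp.Kc p ⊆ cp.Kc q)
    (hright : cp.Kc q ∩ cp.Kc (q + 1) ⊆ cp.Kc p) {x u : V} (hx : x ∉ cp.segment p q)
    (hu : u ∈ cp.segment p q \ (cp.Kc p ∩ cp.Kc q)) : ¬ H.Adj x u := by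
  intro hxu
  obtain ⟨i, hpi, hiq, hui⟩ := mem_segment.1 hu.1
  obtain ⟨j, hxj, huj⟩ := exists_mem_Kc_of_adj hxu
  have hj : j < p ∨ q < j := by
    by_contra! hj
    exact hx (mem_segment.2 ⟨j, hj.1, hj.2, hxj⟩)
  refine hu.2 ?_
  rcases hj with hjp | hqj
  · have hup : u ∈ cp.Kc p := cp.consec u j p i hjp.le hpi huj hui
    exact ⟨hup, hleft ⟨cp.consec u j (p - 1) i (by omega) (by omega) huj hui, hup⟩⟩
  · have huq : u ∈ cp.Kc q := cp.consec u i q j hiq hqj.le hui huj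
    exact ⟨hright ⟨huq, cp.consec u i (q + 1) j (by omega) hqj hui huj⟩, huq⟩

theorem graphModule_segment_sdiff (hleft : cp.Kc (p - 1) ∩ cp.Kc p ⊆ cp.Kc q)
    (hright : cp.Kc q ∩ cp.Kc (q + 1) ⊆ cp.Kc p) :
    GraphModule H (cp.segment p q \ (cp.Kc p ∩ cp.Kc q)) := by
  intro u hu v hv x hx
  by_cases hxA : x ∈ cp.Kc p ∩ cp.Kc q
  · exact iff_of_true (adj_of_mem_inter hxA hu) (adj_of_mem_inter hxA hv)
  · have hxS : x ∉ cp.segment p q := fun h => hx ⟨h, hxA⟩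
    exact iff_of_false (not_adj_of_not_mem_segment hleft hright hxS hu)
      (not_adj_of_not_mem_segment hleft hright hxS hv)

theorem segment_sdiff_ne_univ (hp : 1 ≤ p) (hpq : p < q) (hq : q ≤ cp.len)
    (hproper : 1 < p ∨ q < cp.len) : cp.segment p q \ (cp.Kc p ∩ cp.Kc q) ≠ Set.univ := by
  suffices ∃ x, x ∉ cp.segment p q from
    fun h => this.elim fun x hx => hx (h.symm ▸ Set.mem_univ x).1
  rcases hproper with hp' | hq'
  · obtain ⟨x, hx, hxp⟩ := nonempty_Kc_sdiff (cp := cp) (i := p - 1) (j := p) (by omega) (by omega) hp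
      (by omega) (by omega)
    refine ⟨x, fun hxS => hxp ?_⟩
    obtain ⟨i, hpi, -, hxi⟩ := mem_segment.1 hxS
    exact cp.consec x (p - 1) p i (by omega) hpi hx hxi
  · obtain ⟨x, hx, hxq⟩ := nonempty_Kc_sdiff (cp := cp) (i := q + 1) (j := q) (by omega) hq' (by omega)
      hq (by omega)
    refine ⟨x, fun hxS => hxq ?_⟩
    obtain ⟨i, -, hiq, hxi⟩ := mem_segment.1 hxS
    exact cp.consec x i q (q + 1) hiq (by omega) hxi hx

theorem not_subsingleton_segment_sdiff (hp : 1 ≤ p) (hpq : p < q) (hq : q ≤ cp.len) :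
    ¬ (cp.segment p q \ (cp.Kc p ∩ cp.Kc q)).Subsingleton := by
  obtain ⟨u, hup, huq⟩ := nonempty_Kc_sdiff hp (by omega) (by omega) hq hpq.ne
  obtain ⟨w, hwq, hwp⟩ := nonempty_Kc_sdiff (by omega) hq hp (by omega) hpq.ne'
  intro h
  have huw : u = w := h ⟨mem_segment.2 ⟨p, le_rfl, hpq.le, hup⟩, fun hu => huq hu.2⟩
    ⟨mem_segment.2 ⟨q, hpq.le, le_rfl, hwq⟩, fun hw => hwp hw.1⟩
  exact huq (huw ▸ hwq)

theorem isClique_segment_of_isClique_sdiff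
    (h : H.IsClique (cp.segment p q \ (cp.Kc p ∩ cp.Kc q))) : H.IsClique (cp.segment p q) := by
  intro x hx y hy hxy
  by_cases hxA : x ∈ cp.Kc p ∩ cp.Kc q
  · by_cases hyA : y ∈ cp.Kc p ∩ cp.Kc q
    · exact cp.isClique_Kc p hxA.1 hyA.1 hxy
    · exact adj_of_mem_inter hxA ⟨hy, hyA⟩
  · by_cases hyA : y ∈ cp.Kc p ∩ cp.Kc q
    · exact (adj_of_mem_inter hyA ⟨hx, hxA⟩).symm
    · exact h ⟨hx, hxA⟩ ⟨hy, hyA⟩ hxy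

theorem Kc_eq_segment_of_isClique {i : ℕ} (hi : 1 ≤ i) (hi' : i ≤ cp.len) (hpi : p ≤ i)
    (hiq : i ≤ q) (h : H.IsClique (cp.segment p q)) : cp.Kc i = cp.segment p q :=
  (cp.maxclique i hi hi').2 _ h fun _ hx => mem_segment.2 ⟨i, hpi, hiq, hx⟩

end segment

end CliquePath

theorem statement18_general {V : Type*} (H : SimpleGraph V)
    (cp : CliquePath H) (hqp : QuasiPrime H) :
    ¬ ∃ p q : ℕ, p < q ∧ 1 ≤ p ∧ q ≤ cp.len ∧ (1 < p ∨ q < cp.len) ∧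
        (cp.Kc (p - 1) ∩ cp.Kc p) \ cp.Kc q = ∅ ∧
        (cp.Kc q ∩ cp.Kc (q + 1)) \ cp.Kc p = ∅ := by
  rintro ⟨p, q, hpq, hp, hq, hproper, hleft, hright⟩
  rw [Set.sdiff_eq_empty] at hleft hright
  have hclique : H.IsClique (cp.segment p q) :=
    CliquePath.isClique_segment_of_isClique_sdiff <|
      hqp _ (CliquePath.graphModule_segment_sdiff hleft hright)
        (CliquePath.segment_sdiff_ne_univ hp hpq hq hproper)
        (CliquePath.not_subsingleton_segment_sdiff hp hpq hq)
  have hKp := CliquePath.Kc_eq_segment_of_isClique hp (by omega) le_rfl hpq.le hclique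
  have hKq := CliquePath.Kc_eq_segment_of_isClique (by omega) hq hpq.le le_rfl hclique
  exact hpq.ne (cp.inj p q hp (by omega) (by omega) hq (hKp.trans hKq.symm))

/-- Let `⟨K_1, …, K_ℓ⟩` be a clique path of an interval graph `H`
(with empty sentinels `K_0` and `K_{ℓ+1}`).  If `H` is quasi-prime, then there are no
indices `p < q` with `[p, q]` a proper subinterval of `[1, ℓ]` such that both
`K_{p-1} ∩ K_p \ K_q` and `K_q ∩ K_{q+1} \ K_p` are empty. -/
theorem statement18 {V : Type*} [Fintype V] (H : SimpleGraph V)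
    (hH : IsIntervalGraph H) (cp : CliquePath H) (hqp : QuasiPrime H) :
    ¬ ∃ p q : ℕ, p < q ∧ 1 ≤ p ∧ q ≤ cp.len ∧ (1 < p ∨ q < cp.len) ∧
        (cp.Kc (p - 1) ∩ cp.Kc p) \ cp.Kc q = ∅ ∧
        (cp.Kc q ∩ cp.Kc (q + 1)) \ cp.Kc p = ∅ :=
  statement18_general H cp hqp

end CAG
end
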